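/- Let 1 ≤ n ≤ N. For O Haar-distributed in the orthogonal group O(N), the expected value of (Det_n(O))², where Det_n(O) is the determinant of the upper-left n×n block of O, equals n!(N−n)!/N!. -/

import Mathlib

/-!
Let `A` be the first `n` columns of `O ∈ O(N)`, so `Aᵀ A = 1`. By Cauchy–Binet, summing
`det (A_f)²` over all maps `f : Fin n → Fin N` (the `n × n` minor with rows `f`) gives
`n! · det (Aᵀ A) = n!`. Rows with a repetition give `0`, and by left invariance of Haar measure
under permutation matrices every injective `f` has the same average as the upper-left block. There
are `N! / (N - n)!` injective `f`, whence the average `n! (N - n)! / N!`.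
-/

open MeasureTheory

namespace RandomImmanants

/-- The Borel/pi measurable structure on square complex matrices. -/
noncomputable instance (N : ℕ) : MeasurableSpace (Matrix (Fin N) (Fin N) ℂ) :=
  inferInstanceAs (MeasurableSpace (Fin N → Fin N → ℂ))

/-- The Borel/pi measurable structure on square real matrices. -/
instance (N : ℕ) : MeasurableSpace (Matrix (Fin N) (Fin N) ℝ) :=
  inferInstanceAs (MeasurableSpace (Fin N → Fin N → ℝ))

/-- The `i`-th largest part (0-indexed) of a partition; `0` beyond its length. -/
def partNth {n : ℕ} (γ : Nat.Partition n) (i : ℕ) : ℕ :=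
  ((γ.parts.sort (· ≤ ·)).reverse).getD i 0

/-- The number of colorings `g : {0,…,m-1} → {0,…,m-1}` that are constant on the cycles
of `π` and whose color class sizes are prescribed by `β` (this is the evaluation of the
complete homogeneous symmetric function `h_β` against the power sum `p_μ`, `μ` the cycle
type of `π`; a negative entry of `β` gives `0`). -/
def etaChar {m : ℕ} (β : Fin m → ℤ) (π : Equiv.Perm (Fin m)) : ℤ :=
  ((Finset.univ.filter fun g : Fin m → Fin m =>
    g ∘ π = g ∧ ∀ i : Fin m,
      (((Finset.univ.filter fun k => g k = i).card : ℤ) = β i)).card : ℤ)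

/-- The irreducible character `χ_γ` of the symmetric group `S_m` labelled by the partition
`γ ⊢ m`, via the Jacobi–Trudi determinantal formula `χ_γ = det (h_{γ_i - i + j})_{1 ≤ i,j ≤ m}`
applied to power sums. -/
def chiChar {m : ℕ} (γ : Nat.Partition m) (π : Equiv.Perm (Fin m)) : ℤ :=
  ∑ σ : Equiv.Perm (Fin m),
    ((Equiv.Perm.sign σ : ℤˣ) : ℤ) *
      etaChar (fun i => (partNth γ i : ℤ) + ((σ i : ℕ) : ℤ) - ((i : ℕ) : ℤ)) π

/-- The partition `2λ = (2λ₁, 2λ₂, …)` of `2n` obtained by doubling each part of `λ ⊢ n`. -/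
def doublePart {n : ℕ} (lam : Nat.Partition n) : Nat.Partition (2 * n) where
  parts := lam.parts.map (fun a => 2 * a)
  parts_pos := by
    intro i hi
    obtain ⟨a, ha, rfl⟩ := Multiset.mem_map.mp hi
    have := lam.parts_pos ha
    omega
  parts_sum := by
    have h : (lam.parts.map fun a => 2 * a).sum = 2 * lam.parts.sum := by
      simpa using Multiset.sum_map_mul_left (a := (2 : ℕ)) (f := fun a => a) (s := lam.parts)
    rw [h, lam.parts_sum]

/-- The partition `(1ⁿ)` of `n`. -/
def onesPart (n : ℕ) : Nat.Partition n where
  parts := Multiset.replicate n 1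
  parts_pos := by
    intro i hi
    rw [Multiset.eq_of_mem_replicate hi]
    exact one_pos
  parts_sum := by simp

/-- Letters `{1,…,2n}` (0-indexed: `{0,…,2n-1}`) as pairs: `(k, r) ↦ 2k + r`, so the
1-indexed letter `2k-1` (odd) is `(k-1, 0)` and the letter `2k` (even) is `(k-1, 1)`. -/
def pairEquiv (n : ℕ) : Fin n × Fin 2 ≃ Fin (2 * n) where
  toFun x := ⟨2 * (x.1 : ℕ) + (x.2 : ℕ), by have h1 := x.1.isLt; have h2 := x.2.isLt; omega⟩
  invFun i := (⟨(i : ℕ) / 2, by have := i.isLt; omega⟩, ⟨(i : ℕ) % 2, by omega⟩)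
  left_inv := by
    rintro ⟨⟨a, ha⟩, ⟨b, hb⟩⟩
    simp only [Prod.mk.injEq]
    constructor <;> exact Fin.ext (by simp; omega)
  right_inv := by
    rintro ⟨v, hv⟩
    exact Fin.ext (by simp; omega)

/-- The fixed-point free involution `p = (1 2)(3 4)⋯(2n-1 2n)` of `{1,…,2n}`. -/
def pairSwap (n : ℕ) : Equiv.Perm (Fin (2 * n)) :=
  (pairEquiv n).permCongr (Equiv.prodCongr (Equiv.refl (Fin n)) (Equiv.swap 0 1))

/-- For `π ∈ S_n`, the permutation `π_o ∈ S_{2n}` acting on the odd letters: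
`π_o(2k-1) = 2π(k)-1` and `π_o(2k) = 2k` (1-indexed). -/
def toOdd {n : ℕ} (π : Equiv.Perm (Fin n)) : Equiv.Perm (Fin (2 * n)) :=
  (pairEquiv n).permCongr
    (Equiv.prodCongrLeft fun r : Fin 2 => if r = 0 then π else Equiv.refl (Fin n))

/-- For `π ∈ S_n`, the permutation `π_e ∈ S_{2n}` acting on the even letters:
`π_e(2k) = 2π(k)` and `π_e(2k-1) = 2k-1` (1-indexed). -/
def toEven {n : ℕ} (π : Equiv.Perm (Fin n)) : Equiv.Perm (Fin (2 * n)) :=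
  (pairEquiv n).permCongr
    (Equiv.prodCongrLeft fun r : Fin 2 => if r = 1 then π else Equiv.refl (Fin n))

/-- The hyperoctahedral group `H_n ⊂ S_{2n}`: the centralizer of the trivial matching
`{{1,2},{3,4},…,{2n-1,2n}}`, i.e. of the involution `pairSwap n`. -/
def hyperOct (n : ℕ) : Finset (Equiv.Perm (Fin (2 * n))) :=
  Finset.univ.filter fun h => h * pairSwap n = pairSwap n * h

/-- The zonal spherical function `ω_λ` of the Gelfand pair `(S_{2n}, H_n)`:
`ω_λ(τ) = (1/|H_n|) ∑_{ξ ∈ H_n} χ_{2λ}(τξ)`. -/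
noncomputable def omegaSph {n : ℕ} (lam : Nat.Partition n) (τ : Equiv.Perm (Fin (2 * n))) : ℝ :=
  (1 / ((hyperOct n).card : ℝ)) * ∑ ξ ∈ hyperOct n, (chiChar (doublePart lam) (τ * ξ) : ℝ)

/-- `g_λ = ∑_{μ ⊢ n} |C_μ| ω_λ(μ)`, written as a sum over `S_n` (the permutations of cycle
type `μ`, embedded on the odd letters, contribute `|C_μ| ω_λ(μ)`). -/
noncomputable def gFun {n : ℕ} (lam : Nat.Partition n) : ℝ :=
  ∑ σ : Equiv.Perm (Fin n), omegaSph lam (toOdd σ)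

/-- `G_{λ,γ} = ∑_{μ ⊢ n} |C_μ| ω_λ(μ) χ_γ(μ)`, written as a sum over `S_n`. -/
noncomputable def GFun {n : ℕ} (lam γ : Nat.Partition n) : ℝ :=
  ∑ σ : Equiv.Perm (Fin n), omegaSph lam (toOdd σ) * (chiChar γ σ : ℝ)

/-- `[N]_γ^{(α)} = ∏_{(i,j) ∈ γ} (N + α(j-1) - i + 1)`, the product running over the boxes
of the Young diagram of `γ` (row `i`, column `j`, 1-indexed). -/
def polyGen (α : ℤ) (N : ℤ) {m : ℕ} (γ : Nat.Partition m) : ℤ :=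
  ∏ i ∈ Finset.range m, ∏ j ∈ Finset.range (partNth γ i), (N + α * (j : ℤ) - (i : ℤ))

/-- The upper-left `n × n` block of an `N × N` matrix (junk value `0` if `n > N`). -/
def subBlock (n N : ℕ) {R : Type*} [Zero R] (U : Matrix (Fin N) (Fin N) R) :
    Matrix (Fin n) (Fin n) R := fun i j =>
  if h : (i : ℕ) < N ∧ (j : ℕ) < N then U ⟨i, h.1⟩ ⟨j, h.2⟩ else 0

/-- The permanent of a square matrix. -/
def perMat {m : ℕ} {R : Type*} [CommRing R] (A : Matrix (Fin m) (Fin m) R) : R :=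
  ∑ π : Equiv.Perm (Fin m), ∏ k : Fin m, A k (π k)

/-- The immanant `Imm_γ(A) = ∑_{π ∈ S_m} χ_γ(π) ∏_k A_{k, π(k)}`. -/
def immMat {m : ℕ} {R : Type*} [CommRing R] (γ : Nat.Partition m)
    (A : Matrix (Fin m) (Fin m) R) : R :=
  ∑ π : Equiv.Perm (Fin m), (chiChar γ π : R) * ∏ k : Fin m, A k (π k)

/-- The full cycle type of a permutation of `m` letters, a partition of `m`
(fixed points contribute parts equal to `1`). -/
def fullCycleType {m : ℕ} [Fintype (Fin m)] (σ : Equiv.Perm (Fin m)) : Multiset ℕ :=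
  σ.cycleType + Multiset.replicate (m - σ.cycleType.sum) 1

/-- Halve all multiplicities in a multiset. -/
def halfMultiset (ν : Multiset ℕ) : Multiset ℕ :=
  ∑ k ∈ ν.toFinset, Multiset.replicate (ν.count k / 2) k

/-- The coset type of `σ ∈ S_{2n}`: the connected components of the graph on `{1,…,2n}`
whose edges are the blocks of the trivial matching `t` and of `σ(t)` are exactly the
cycle-pairs of the permutation `p ∘ (σ p σ⁻¹)` (`p = pairSwap n`), each component with `2k`
vertices producing two `k`-cycles; so the coset type is obtained by halving the multiplicities
in the full cycle type of `p * (σ * p * σ⁻¹)`. -/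
def cosetTypeM (n : ℕ) (σ : Equiv.Perm (Fin (2 * n))) : Multiset ℕ :=
  halfMultiset (fullCycleType (pairSwap n * (σ * pairSwap n * σ⁻¹)))

open Matrix

section Determinants

variable {m n R : Type*} [Fintype m] [DecidableEq n] [CommRing R]

theorem det_eq_sum_sign_mul_prod_apply_perm [Fintype n] (M : Matrix n n R) :
    M.det = ∑ τ : Equiv.Perm n, (Equiv.Perm.sign τ : R) * ∏ i, M i (τ i) := by
  rw [← det_transpose, det_apply']
  rfl

/-- Cauchy–Binet, summed over all `f : n → m` rather than over `n`-subsets of `m`: each subset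
occurs once for every ordering, and non-injective `f` contribute `0`. -/
theorem sum_det_submatrix_mul_det_submatrix [Fintype n] (A B : Matrix m n R) :
    ∑ f : n → m, (A.submatrix f id).det * (B.submatrix f id).det
      = (Fintype.card n).factorial * (Aᵀ * B).det := by
  have sum_prod : ∀ σ τ : Equiv.Perm n,
      ∑ f : n → m, ∏ i, A (f i) (σ i) * B (f i) (τ i) = ∏ i, (Aᵀ * B) (σ i) (τ i) := by
    intro σ τ
    simp only [mul_apply, transpose_apply, Finset.prod_univ_sum, Fintype.piFinset_univ]
  have permute : ∀ σ : Equiv.Perm n,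
      ∑ τ : Equiv.Perm n, (Equiv.Perm.sign τ : R) * ∏ i, (Aᵀ * B) (σ i) (τ i)
        = Equiv.Perm.sign σ * (Aᵀ * B).det := by
    intro σ
    rw [← det_permute, det_eq_sum_sign_mul_prod_apply_perm]
    rfl
  calc ∑ f : n → m, (A.submatrix f id).det * (B.submatrix f id).det
      = ∑ σ : Equiv.Perm n, ∑ τ : Equiv.Perm n,
          (Equiv.Perm.sign σ : R) * Equiv.Perm.sign τ *
            ∑ f : n → m, ∏ i, A (f i) (σ i) * B (f i) (τ i) := by
        simp only [det_eq_sum_sign_mul_prod_apply_perm, submatrix_apply, id, Finset.sum_mul_sum]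
        rw [Finset.sum_comm]
        refine Finset.sum_congr rfl fun σ _ => ?_
        rw [Finset.sum_comm]
        refine Finset.sum_congr rfl fun τ _ => ?_
        rw [Finset.mul_sum]
        refine Finset.sum_congr rfl fun f _ => ?_
        rw [Finset.prod_mul_distrib]
        ring
    _ = ∑ σ : Equiv.Perm n, (Equiv.Perm.sign σ : R) * Equiv.Perm.sign σ * (Aᵀ * B).det := by
        refine Finset.sum_congr rfl fun σ _ => ?_
        simp only [sum_prod, mul_assoc, ← Finset.mul_sum, permute]
    _ = (Fintype.card n).factorial * (Aᵀ * B).det := by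
        simp [← Int.cast_mul, ← Units.val_mul, Fintype.card_perm]

theorem sum_det_sq_submatrix_eq_factorial [Fintype n] (A : Matrix m n R) (hA : Aᵀ * A = 1) :
    ∑ f : n → m, (A.submatrix f id).det ^ 2 = (Fintype.card n).factorial := by
  simpa [sq, hA] using sum_det_submatrix_mul_det_submatrix A A

theorem permMatrix_mem_orthogonalGroup [DecidableEq m] (σ : Equiv.Perm m) :
    σ.permMatrix R ∈ orthogonalGroup m R := by
  rw [mem_orthogonalGroup_iff', transpose_permMatrix, ← permMatrix_mul, mul_inv_cancel,
    permMatrix_one]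

theorem transpose_mul_self_submatrix_of_mem_orthogonalGroup [DecidableEq m] {O : Matrix m m R}
    (hO : O ∈ orthogonalGroup m R) {c : n → m} (hc : Function.Injective c) :
    (O.submatrix id c)ᵀ * O.submatrix id c = 1 := by
  rw [transpose_submatrix, ← submatrix_mul _ _ _ _ _ Function.bijective_id,
    (mem_orthogonalGroup_iff' m R).1 hO, submatrix_one c hc]

end Determinants

theorem card_filter_injective (α β : Type*) [Fintype α] [Fintype β] [DecidableEq α]
    [DecidableEq β] :
    (Finset.univ.filter fun f : α → β => Function.Injective f).card
      = (Fintype.card β).descFactorial (Fintype.card α) := by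
  rw [← Fintype.card_subtype, Fintype.card_congr (Equiv.subtypeInjectiveEquivEmbedding α β),
    Fintype.card_embedding_eq]

instance (N : ℕ) : BorelSpace (Matrix (Fin N) (Fin N) ℝ) :=
  inferInstanceAs (BorelSpace (Fin N → Fin N → ℝ))

section Haar

variable {N : ℕ} {ι κ : Type*} [Fintype ι] (ν : Measure (orthogonalGroup (Fin N) ℝ))

/-- Left multiplication by a permutation matrix moves any injective choice of rows to any other. -/
theorem integral_submatrix_eq_of_injective [ν.IsMulLeftInvariant] (Φ : Matrix ι κ ℝ → ℝ)
    {r r' : ι → Fin N} (hr : Function.Injective r) (hr' : Function.Injective r')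
    (c : κ → Fin N) :
    ∫ O, Φ ((O : Matrix (Fin N) (Fin N) ℝ).submatrix r c) ∂ν
      = ∫ O, Φ ((O : Matrix (Fin N) (Fin N) ℝ).submatrix r' c) ∂ν := by
  obtain ⟨σ, hσ⟩ := Equiv.Perm.exists_extending_pair r' r hr' hr
  let g : orthogonalGroup (Fin N) ℝ := ⟨σ.permMatrix ℝ, permMatrix_mem_orthogonalGroup σ⟩
  have hg : ∀ O : orthogonalGroup (Fin N) ℝ,
      ((g * O : orthogonalGroup (Fin N) ℝ) : Matrix (Fin N) (Fin N) ℝ).submatrix r' c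
        = (O : Matrix (Fin N) (Fin N) ℝ).submatrix r c := by
    intro O
    ext i j
    simp [g, PEquiv.toMatrix_toPEquiv_mul, hσ]
  simp_rw [← hg]
  exact integral_mul_left_eq_self (fun O : orthogonalGroup (Fin N) ℝ =>
    Φ ((O : Matrix (Fin N) (Fin N) ℝ).submatrix r' c)) g

theorem integrable_det_sq_submatrix [IsFiniteMeasure ν] [DecidableEq ι]
    {c : ι → Fin N} (hc : Function.Injective c) (f : ι → Fin N) :
    Integrable (fun O : orthogonalGroup (Fin N) ℝ =>
      ((O : Matrix (Fin N) (Fin N) ℝ).submatrix f c).det ^ 2) ν := by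
  refine Integrable.of_bound
    ((continuous_subtype_val.matrix_submatrix f c).matrix_det.pow 2).aestronglyMeasurable
    (Fintype.card ι).factorial
    (Filter.Eventually.of_forall fun O => ?_)
  rw [Real.norm_of_nonneg (sq_nonneg _),
    ← sum_det_sq_submatrix_eq_factorial _
      (transpose_mul_self_submatrix_of_mem_orthogonalGroup O.2 hc)]
  exact Finset.single_le_sum (f := fun f : ι → Fin N =>
    (((O : Matrix (Fin N) (Fin N) ℝ).submatrix id c).submatrix f id).det ^ 2)
    (fun _ _ => sq_nonneg _) (Finset.mem_univ f)

theorem descFactorial_mul_integral_det_sq_submatrix [ν.IsMulLeftInvariant]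
    [IsProbabilityMeasure ν] [DecidableEq ι] {r c : ι → Fin N} (hr : Function.Injective r)
    (hc : Function.Injective c) :
    N.descFactorial (Fintype.card ι) *
        ∫ O, ((O : Matrix (Fin N) (Fin N) ℝ).submatrix r c).det ^ 2 ∂ν
      = (Fintype.card ι).factorial := by
  have row_integral : ∀ f : ι → Fin N,
      ∫ O, ((O : Matrix (Fin N) (Fin N) ℝ).submatrix f c).det ^ 2 ∂ν
        = if Function.Injective f then
            ∫ O, ((O : Matrix (Fin N) (Fin N) ℝ).submatrix r c).det ^ 2 ∂ν else 0 := by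
    intro f
    split_ifs with hf
    · exact integral_submatrix_eq_of_injective ν (fun A => A.det ^ 2) hf hr c
    · obtain ⟨i, j, hij, hne⟩ := Function.not_injective_iff.mp hf
      have hdet : ∀ O : orthogonalGroup (Fin N) ℝ,
          ((O : Matrix (Fin N) (Fin N) ℝ).submatrix f c).det = 0 := fun O =>
        det_zero_of_row_eq hne (by ext; simp [hij])
      simp [hdet]
  calc N.descFactorial (Fintype.card ι) *
          ∫ O, ((O : Matrix (Fin N) (Fin N) ℝ).submatrix r c).det ^ 2 ∂ν
      = ∑ f : ι → Fin N,
          ∫ O, ((O : Matrix (Fin N) (Fin N) ℝ).submatrix f c).det ^ 2 ∂ν := by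
        rw [Finset.sum_congr rfl fun f _ => row_integral f, Finset.sum_ite, Finset.sum_const,
          Finset.sum_const_zero, add_zero, card_filter_injective, Fintype.card_fin, nsmul_eq_mul]
    _ = ∫ O, ∑ f : ι → Fin N,
          ((O : Matrix (Fin N) (Fin N) ℝ).submatrix f c).det ^ 2 ∂ν :=
        (integral_finsetSum _ fun f _ => integrable_det_sq_submatrix ν hc f).symm
    _ = (Fintype.card ι).factorial := by
        have cauchy_binet : ∀ O : orthogonalGroup (Fin N) ℝ,
            ∑ f : ι → Fin N, ((O : Matrix (Fin N) (Fin N) ℝ).submatrix f c).det ^ 2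
              = (Fintype.card ι).factorial := fun O =>
          sum_det_sq_submatrix_eq_factorial _
            (transpose_mul_self_submatrix_of_mem_orthogonalGroup O.2 hc)
        simp [cauchy_binet]

end Haar

theorem subBlock_eq_submatrix {n N : ℕ} (h : n ≤ N) {R : Type*} [Zero R]
    (U : Matrix (Fin N) (Fin N) R) :
    subBlock n N U = U.submatrix (Fin.castLE h) (Fin.castLE h) := by
  ext i j
  exact dif_pos ⟨i.2.trans_le h, j.2.trans_le h⟩

theorem determinant_sq_avg_orthogonal_general (n N : ℕ) (hnN : n ≤ N)
    (ν : Measure (Matrix.orthogonalGroup (Fin N) ℝ))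
    [ν.IsHaarMeasure] [IsProbabilityMeasure ν] :
    ∫ O, (Matrix.det (subBlock n N (O : Matrix (Fin N) (Fin N) ℝ))) ^ 2 ∂ν
      = ((n.factorial : ℝ) * ((N - n).factorial : ℝ)) / (N.factorial : ℝ) := by
  have key := descFactorial_mul_integral_det_sq_submatrix ν (Fin.castLE_injective hnN)
    (Fin.castLE_injective hnN)
  simp_rw [Fintype.card_fin] at key
  have hfac : ((N - n).factorial * N.descFactorial n : ℝ) = N.factorial := by
    exact_mod_cast Nat.factorial_mul_descFactorial hnN
  simp_rw [subBlock_eq_submatrix hnN]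
  rw [eq_div_iff (by positivity), ← hfac, ← key]
  ring

/-- For `1 ≤ n ≤ N` and `O` Haar-distributed in the orthogonal group
`O(N)`, the average of `(Det_n(O))²` over the upper-left `n × n` block equals
`n!(N-n)!/N!`. -/
theorem determinant_sq_avg_orthogonal (n N : ℕ) (hn : 1 ≤ n) (hnN : n ≤ N)
    (ν : Measure (Matrix.orthogonalGroup (Fin N) ℝ))
    [ν.IsHaarMeasure] [IsProbabilityMeasure ν] :
    ∫ O, (Matrix.det (subBlock n N (O : Matrix (Fin N) (Fin N) ℝ))) ^ 2 ∂ν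
      = ((n.factorial : ℝ) * ((N - n).factorial : ℝ)) / (N.factorial : ℝ) :=
  determinant_sq_avg_orthogonal_general n N hnN ν

end RandomImmanants
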